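/- Let (t,u,v,w) ∈ 𝒫 and assume u = v = w does not hold. Let s ∈ {x,y,z}, p ∈ ℤ, and let ω : ℤ → A be the shifted symmetric sequence ω(n) := ω⁽ˢ⁾(n + p). Then the associated Schrödinger-type operator has no eigenvalues: for every E ∈ ℝ, every u : ℤ → ℂ with ∑_{n∈ℤ} |u(n)|² < ∞ satisfying f_ω(n)u(n+1) + f_ω(n−1)u(n−1) + g_ω(n)u(n) = E·u(n) for all n ∈ ℤ vanishes identically. (This is the absence of eigenvalues for the Laplacians on the Schreier graphs in the family X₁, transported to the subshift side.) -/

import Mathlib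

/-!
For the infinitely many `n` with `τⁿ(x) = s`, write `Q = 2ⁿ⁺¹`. Since `τⁿ⁺¹(a) = W c W` with
`W = τⁿ(a)` a palindrome and `c = τⁿ(x)`, the sequence `ω⁽ˢ⁾` reads `a c W c W c W` on
`[-Q - 1, 2Q)`, i.e. it is `Q`-periodic on three consecutive blocks around the origin. Gordon's
argument then applies to the transfer matrix `T` over one block: it is the same for all three
blocks, and its determinant telescopes to a ratio of two hopping coefficients one period apart,
so `det T = 1`. By Cayley–Hamilton the state vectors `Φ(k) = (ψ k, ψ (k - 1))`
satisfy `Φ(Q) + Φ(-Q) = tr T • Φ(0)` and `Φ(2Q) + Φ(0) = tr T • Φ(Q)`. Whether `‖tr T‖ ≤ 1`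
or not, this gives `‖Φ(0)‖ ≤ ‖Φ(-Q)‖ + ‖Φ(Q)‖ + ‖Φ(2Q)‖`, and the right side tends to `0` as
`Q → ∞` because `ψ` is square-summable. Hence `Φ(0) = 0`, and the recurrence, whose hopping
coefficients never vanish on `𝒫`, propagates this to `ψ = 0`.
-/

/-- The four-letter alphabet `A = {a, x, y, z}`. -/
inductive A : Type
  | a | x | y | z
  deriving DecidableEq, Repr

/-- The substitution `τ : a ↦ axa, x ↦ y, y ↦ z, z ↦ x`. -/
def tau : A → List A
  | A.a => [A.a, A.x, A.a]
  | A.x => [A.y]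
  | A.y => [A.z]
  | A.z => [A.x]

/-- The substitution `τ` extended to finite words by concatenation. -/
def tauW (w : List A) : List A := w.flatMap tau

/-- `pw n = τⁿ(a)`, a word of length `2^(n+1) - 1`. -/
def pw : ℕ → List A
  | 0 => [A.a]
  | n + 1 => tauW (pw n)

/-- The fixed point `η` of `τ`: the unique one-sided infinite word having every
`τⁿ(a)` as a prefix.  (Since `pw (n+1)` has length `2^(n+2) - 1 > n`, reading its
`n`-th letter is well defined and independent of the choice of a large enough iterate.) -/
def eta (n : ℕ) : A := (pw (n + 1)).getD n A.a

/-- `w` is a (finite) factor of `η`. -/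
def IsFactorEta (w : List A) : Prop :=
  ∃ i : ℕ, w = (List.range w.length).map (fun k => eta (i + k))

/-- The special two-sided sequence `ω⁽ˢ⁾`, with `ω⁽ˢ⁾(0) = s` and
`ω⁽ˢ⁾(k) = η(|k| - 1)` for `k ≠ 0`. -/
def omegaS (s : A) : ℤ → A := fun k => if k = 0 then s else eta (k.natAbs - 1)

/-- The diagonal-adjacent (hopping) coefficients `f_ω` of the Schrödinger operator
associated to `ω` and parameters `(t,u,v,w)`. -/
def fcoef (t u v w : ℝ) (ω : ℤ → A) (n : ℤ) : ℝ :=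
  match ω n with
  | A.a => t
  | A.x => u + v
  | A.y => u + w
  | A.z => v + w

/-- The diagonal (potential) coefficients `g_ω` of the Schrödinger operator
associated to `ω` and parameters `(t,u,v,w)`. -/
def gcoef (_t u v w : ℝ) (ω : ℤ → A) (n : ℤ) : ℝ :=
  if ω (n - 1) = A.x ∨ ω n = A.x then w
  else if ω (n - 1) = A.y ∨ ω n = A.y then v
  else u

/-- The parameter set `𝒫`. -/
def paramP (t u v w : ℝ) : Prop := t ≠ 0 ∧ u + v ≠ 0 ∧ u + w ≠ 0 ∧ v + w ≠ 0

open Filter Topology Matrix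

/-- The letter `τⁿ(x)`, which separates the two copies of `τⁿ(a)` in `τⁿ⁺¹(a)`. -/
def midLetter (n : ℕ) : A :=
  match n % 3 with
  | 0 => A.x
  | 1 => A.y
  | _ => A.z

lemma tau_midLetter (n : ℕ) : tau (midLetter n) = [midLetter (n + 1)] := by
  have h : n % 3 = 0 ∨ n % 3 = 1 ∨ n % 3 = 2 := by omega
  rcases h with h | h | h <;> simp [midLetter, h, Nat.add_mod, tau]

lemma exists_midLetter_eq {s : A} (hs : s ∈ ({A.x, A.y, A.z} : Set A)) :
    ∃ r : ℕ, ∀ k : ℕ, midLetter (3 * k + r) = s := by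
  rcases hs with rfl | rfl | rfl
  · exact ⟨0, fun k => by simp [midLetter]⟩
  · exact ⟨1, fun k => by simp [midLetter, Nat.add_mod]⟩
  · exact ⟨2, fun k => by simp [midLetter, Nat.add_mod]⟩

lemma pw_succ_eq (n : ℕ) : pw (n + 1) = pw n ++ midLetter n :: pw n := by
  induction n with
  | zero => rfl
  | succ n ih =>
    change tauW (pw (n + 1)) = _
    conv_lhs => rw [ih]
    rw [tauW, List.flatMap_append, List.flatMap_cons, tau_midLetter]
    rfl

lemma length_pw (n : ℕ) : (pw n).length = 2 ^ (n + 1) - 1 := by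
  induction n with
  | zero => rfl
  | succ n ih =>
    rw [pw_succ_eq, List.length_append, List.length_cons, ih, pow_succ 2 (n + 1)]
    have := Nat.one_le_two_pow (n := n + 1)
    omega

lemma reverse_pw (n : ℕ) : (pw n).reverse = pw n := by
  induction n with
  | zero => rfl
  | succ n ih => simp [pw_succ_eq, ih]

lemma pw_isPrefix_pw {m n : ℕ} (h : m ≤ n) : pw m <+: pw n := by
  induction n, h using Nat.le_induction with
  | base => exact List.prefix_refl _
  | succ n _ ih => exact ih.trans ⟨_, (pw_succ_eq n).symm⟩

lemma eta_eq_getD_pw {m n : ℕ} (h : m < (pw n).length) : eta m = (pw n).getD m A.a := by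
  have hm : m < (pw (m + 1)).length := by
    rw [length_pw]
    have := Nat.lt_two_pow_self (n := m + 1 + 1)
    omega
  rcases Nat.le_total (m + 1) n with h' | h'
  · obtain ⟨l, hl⟩ := pw_isPrefix_pw h'
    rw [eta, ← hl, List.getD_append _ _ _ _ hm]
  · obtain ⟨l, hl⟩ := pw_isPrefix_pw h'
    rw [eta, ← hl, List.getD_append _ _ _ _ h]

lemma eta_two_pow_sub_one (n : ℕ) : eta (2 ^ (n + 1) - 1) = midLetter n := by
  have hlen := length_pw n
  have hQ := Nat.one_lt_two_pow (n := n + 1) (by omega)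
  rw [eta_eq_getD_pw (n := n + 1) (by rw [length_pw, pow_succ 2 (n + 1)]; omega), pw_succ_eq,
    List.getD_append_right _ _ _ _ (by omega), hlen, Nat.sub_self]
  rfl

lemma eta_two_pow_sub_two_sub {n i : ℕ} (hi : i ≤ 2 ^ (n + 1) - 2) :
    eta (2 ^ (n + 1) - 2 - i) = eta i := by
  have hlen := length_pw n
  have hQ := Nat.one_lt_two_pow (n := n + 1) (by omega)
  rw [eta_eq_getD_pw (n := n) (by omega), eta_eq_getD_pw (n := n) (by omega),
    List.getD_eq_getElem?_getD, List.getD_eq_getElem?_getD]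
  conv_rhs => rw [← reverse_pw n, List.getElem?_reverse (by omega), hlen]
  congr 2

lemma eta_add_two_pow {n i : ℕ} (hi : i ≤ 2 ^ (n + 1) - 2) : eta (i + 2 ^ (n + 1)) = eta i := by
  have hlen := length_pw n
  have hQ := Nat.one_lt_two_pow (n := n + 1) (by omega)
  rw [eta_eq_getD_pw (n := n + 1) (by rw [length_pw, pow_succ 2 (n + 1)]; omega),
    eta_eq_getD_pw (n := n) (by omega), pw_succ_eq, ← List.singleton_append, ← List.append_assoc,
    List.getD_append_right _ _ _ _ (by simp; omega)]
  congr 1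
  simp only [List.length_append, List.length_singleton]
  omega

lemma omegaS_add_two_pow {s : A} {n : ℕ} (hs : midLetter n = s) {j : ℤ}
    (h₁ : -2 ^ (n + 1) - 1 ≤ j) (h₂ : j ≤ 2 ^ (n + 1) - 1) :
    omegaS s (j + 2 ^ (n + 1)) = omegaS s j := by
  obtain ⟨Q, hQ⟩ : ∃ Q : ℕ, Q = 2 ^ (n + 1) := ⟨_, rfl⟩
  have hQ₂ : 2 ≤ Q := hQ ▸ Nat.le_self_pow (by omega) 2
  have hQℤ : (2 : ℤ) ^ (n + 1) = Q := by rw [hQ]; push_cast; rfl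
  have hmid : eta (Q - 1) = s := hQ ▸ hs ▸ eta_two_pow_sub_one n
  rw [hQℤ] at h₁ h₂ ⊢
  simp only [omegaS]
  split_ifs with hjQ hj hj
  · omega
  · rw [show j.natAbs - 1 = Q - 1 by omega, hmid]
  · rw [show (j + Q).natAbs - 1 = Q - 1 by omega, hmid]
  rcases lt_or_gt_of_ne hj with hneg | hpos
  · rcases eq_or_lt_of_le h₁ with rfl | h₁
    · rw [show (-(Q : ℤ) - 1 + Q).natAbs - 1 = 0 by omega,
        show (-(Q : ℤ) - 1).natAbs - 1 = 0 + Q by omega,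
        hQ, eta_add_two_pow (by omega)]
    · rw [show (j + Q).natAbs - 1 = Q - 2 - (j.natAbs - 1) by omega, hQ,
        eta_two_pow_sub_two_sub (by omega)]
  · rw [show (j + Q).natAbs - 1 = (j.natAbs - 1) + Q by omega, hQ, eta_add_two_pow (by omega)]

section Transfer

variable {𝕜 : Type*} [Field 𝕜] {F G ψ : ℤ → 𝕜} {E : 𝕜}

def IsJacobiSolution (F G : ℤ → 𝕜) (E : 𝕜) (ψ : ℤ → 𝕜) : Prop :=
  ∀ n : ℤ, F n * ψ (n + 1) + F (n - 1) * ψ (n - 1) + G n * ψ n = E * ψ n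

def stateVec (ψ : ℤ → 𝕜) (n : ℤ) : Fin 2 → 𝕜 := ![ψ n, ψ (n - 1)]

def transferStep (F G : ℤ → 𝕜) (E : 𝕜) (n : ℤ) : Matrix (Fin 2) (Fin 2) 𝕜 :=
  !![(E - G n) / F n, -F (n - 1) / F n; 1, 0]

def transferMatrix (F G : ℤ → 𝕜) (E : 𝕜) (r : ℤ) : ℕ → Matrix (Fin 2) (Fin 2) 𝕜
  | 0 => 1
  | k + 1 => transferStep F G E (r + k) * transferMatrix F G E r k

lemma stateVec_add_one (hF : ∀ n, F n ≠ 0) (hψ : IsJacobiSolution F G E ψ) (n : ℤ) :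
    stateVec ψ (n + 1) = transferStep F G E n *ᵥ stateVec ψ n := by
  have hnext : ψ (n + 1) = (E - G n) / F n * ψ n + -F (n - 1) / F n * ψ (n - 1) := by
    field_simp [hF n]
    linear_combination hψ n
  rw [stateVec, stateVec, add_sub_cancel_right, mulVec_fin_two, hnext]
  simp [transferStep]

lemma stateVec_add_natCast (hF : ∀ n, F n ≠ 0) (hψ : IsJacobiSolution F G E ψ) (r : ℤ) (k : ℕ) :
    stateVec ψ (r + k) = transferMatrix F G E r k *ᵥ stateVec ψ r := by
  induction k with
  | zero => simp [transferMatrix]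
  | succ k ih =>
    rw [Nat.cast_succ, ← add_assoc, stateVec_add_one hF hψ, ih, transferMatrix, mulVec_mulVec]

lemma transferMatrix_congr {r r' : ℤ} {k : ℕ}
    (h : ∀ i < k, transferStep F G E (r + i) = transferStep F G E (r' + i)) :
    transferMatrix F G E r k = transferMatrix F G E r' k := by
  induction k with
  | zero => rfl
  | succ k ih =>
    rw [transferMatrix, transferMatrix, h k k.lt_succ_self, ih fun i hi => h i (by omega)]

lemma det_transferMatrix (hF : ∀ n, F n ≠ 0) (r : ℤ) (k : ℕ) :
    (transferMatrix F G E r k).det = F (r - 1) / F (r + k - 1) := by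
  induction k with
  | zero => simp [transferMatrix, div_self (hF _)]
  | succ k ih =>
    rw [transferMatrix, det_mul, ih, transferStep, det_fin_two_of]
    push_cast
    rw [show r + (k + 1 : ℤ) - 1 = r + k by ring]
    field_simp [hF (r + k), hF (r + k - 1)]
    ring

lemma mulVec_mulVec_add_eq_trace_smul {R : Type*} [CommRing R] [Nontrivial R]
    {M : Matrix (Fin 2) (Fin 2) R} (h : M.det = 1) (v : Fin 2 → R) :
    M *ᵥ (M *ᵥ v) + v = M.trace • M *ᵥ v := by
  have hCH : M ^ 2 - M.trace • M + 1 = 0 := by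
    simpa [charpoly_fin_two, h, Algebra.smul_def] using M.aeval_self_charpoly
  rw [sub_add_eq_add_sub, sub_eq_zero, sq] at hCH
  rw [mulVec_mulVec, ← smul_mulVec, ← hCH, add_mulVec, one_mulVec]

lemma eq_zero_of_stateVec_eq_zero (hF : ∀ n, F n ≠ 0) (hψ : IsJacobiSolution F G E ψ) {n₀ : ℤ}
    (h : stateVec ψ n₀ = 0) : ψ = 0 := by
  have hzero : ∀ n, stateVec ψ n = 0 := by
    intro n
    induction n using Int.inductionOn' (b := n₀) with
    | zero => exact h
    | succ n _ ih => rw [stateVec_add_one hF hψ, ih, mulVec_zero]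
    | pred n _ ih =>
      have h₀ : ψ n = 0 := congrFun ih 0
      have h₁ : ψ (n - 1) = 0 := congrFun ih 1
      have hrec := hψ (n - 1)
      rw [sub_add_cancel, h₀, h₁] at hrec
      have h₂ : ψ (n - 1 - 1) = 0 := by
        have : F (n - 1 - 1) * ψ (n - 1 - 1) = 0 := by linear_combination hrec
        exact (mul_eq_zero.1 this).resolve_left (hF _)
      ext i
      fin_cases i
      · exact h₁
      · exact h₂
  funext n
  exact congrFun (hzero n) 0

end Transfer

section Gordon

variable {𝕜 : Type*} [NormedField 𝕜] {F G ψ : ℤ → 𝕜} {E : 𝕜}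

lemma norm_le_of_trace_relations {V : Type*} [SeminormedAddCommGroup V] [NormedSpace 𝕜 V]
    {c : 𝕜} {a x b y : V} (h₁ : b + a = c • x) (h₂ : y + x = c • b) :
    ‖x‖ ≤ ‖a‖ + ‖b‖ + ‖y‖ := by
  rcases le_or_gt ‖c‖ 1 with hc | hc
  · have hx : x = c • b - y := by rw [← h₂, add_sub_cancel_left]
    calc ‖x‖ ≤ ‖c‖ * ‖b‖ + ‖y‖ := by rw [hx, ← norm_smul]; exact norm_sub_le _ _
      _ ≤ ‖a‖ + ‖b‖ + ‖y‖ := by nlinarith [norm_nonneg a, norm_nonneg b]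
  · calc ‖x‖ ≤ ‖c‖ * ‖x‖ := le_mul_of_one_le_left (norm_nonneg x) hc.le
      _ = ‖b + a‖ := by rw [h₁, norm_smul]
      _ ≤ ‖a‖ + ‖b‖ + ‖y‖ := by linarith [norm_add_le b a, norm_nonneg y]

lemma norm_stateVec_le_of_periodic (hF : ∀ n, F n ≠ 0) (hψ : IsJacobiSolution F G E ψ)
    {n₀ : ℤ} {Q : ℕ}
    (hFper : ∀ n ∈ Set.Icc (n₀ - Q - 1) (n₀ + Q - 1), F (n + Q) = F n)
    (hGper : ∀ n ∈ Set.Icc (n₀ - Q) (n₀ + Q - 1), G (n + Q) = G n) :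
    ‖stateVec ψ n₀‖ ≤
      ‖stateVec ψ (n₀ - Q)‖ + ‖stateVec ψ (n₀ + Q)‖ + ‖stateVec ψ (n₀ + Q + Q)‖ := by
  have hstep : ∀ n ∈ Set.Icc (n₀ - Q) (n₀ + Q - 1),
      transferStep F G E (n + Q) = transferStep F G E n := by
    rintro n ⟨h₁, h₂⟩
    rw [transferStep, transferStep, hFper n ⟨by omega, h₂⟩, hGper n ⟨h₁, h₂⟩,
      show n + Q - 1 = n - 1 + Q by ring, hFper (n - 1) ⟨by omega, by omega⟩]
  set T := transferMatrix F G E n₀ Q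
  have hT_before : transferMatrix F G E (n₀ - Q) Q = T :=
    transferMatrix_congr fun i hi => by
      rw [← hstep _ ⟨by omega, by omega⟩]
      congr 1
      ring
  have hT_after : transferMatrix F G E (n₀ + Q) Q = T :=
    transferMatrix_congr fun i hi => by rw [add_right_comm, hstep _ ⟨by omega, by omega⟩]
  have hdet : T.det = 1 := by
    rw [det_transferMatrix hF, show n₀ + Q - 1 = n₀ - 1 + Q by ring,
      hFper _ ⟨by omega, by omega⟩, div_self (hF _)]
  have e₀ : stateVec ψ n₀ = T *ᵥ stateVec ψ (n₀ - Q) := by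
    rw [← hT_before, ← stateVec_add_natCast hF hψ, sub_add_cancel]
  have e₁ : stateVec ψ (n₀ + Q) = T *ᵥ stateVec ψ n₀ := stateVec_add_natCast hF hψ n₀ Q
  have e₂ : stateVec ψ (n₀ + Q + Q) = T *ᵥ stateVec ψ (n₀ + Q) := by
    rw [← hT_after, ← stateVec_add_natCast hF hψ]
  refine norm_le_of_trace_relations (c := T.trace) ?_ ?_
  · rw [e₁, e₀, mulVec_mulVec_add_eq_trace_smul hdet]
  · rw [e₂, e₁, mulVec_mulVec_add_eq_trace_smul hdet]

lemma tendsto_norm_stateVec_comp (hψ : Tendsto ψ cofinite (𝓝 0)) {g : ℕ → ℤ}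
    (hg : Function.Injective g) : Tendsto (fun k => ‖stateVec ψ (g k)‖) atTop (𝓝 0) := by
  have hvec : Tendsto (stateVec ψ) cofinite (𝓝 0) := by
    refine tendsto_pi_nhds.2 fun i => ?_
    fin_cases i
    · exact hψ
    · exact hψ.comp (sub_left_injective.tendsto_cofinite)
  rw [← Nat.cofinite_eq_atTop]
  exact (hvec.comp hg.tendsto_cofinite).norm.trans (by rw [norm_zero])

theorem eq_zero_of_frequently_periodic (hF : ∀ n, F n ≠ 0) (hψ : IsJacobiSolution F G E ψ)
    (hdecay : Tendsto ψ cofinite (𝓝 0)) (n₀ : ℤ)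
    (hper : ∃ᶠ Q : ℕ in atTop,
      (∀ n ∈ Set.Icc (n₀ - Q - 1) (n₀ + Q - 1), F (n + Q) = F n) ∧
      (∀ n ∈ Set.Icc (n₀ - Q) (n₀ + Q - 1), G (n + Q) = G n)) :
    ψ = 0 := by
  have hlim : Tendsto (fun Q : ℕ => ‖stateVec ψ (n₀ - Q)‖ + ‖stateVec ψ (n₀ + Q)‖ +
      ‖stateVec ψ (n₀ + Q + Q)‖) atTop (𝓝 0) := by
    have := ((tendsto_norm_stateVec_comp hdecay (g := fun Q : ℕ => n₀ - Q) ?_).add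
      (tendsto_norm_stateVec_comp hdecay (g := fun Q : ℕ => n₀ + Q) ?_)).add
      (tendsto_norm_stateVec_comp hdecay (g := fun Q : ℕ => n₀ + Q + Q) ?_)
    · simpa using this
    all_goals intro a b h; simp only at h; omega
  have hnorm : ‖stateVec ψ n₀‖ ≤ 0 :=
    ge_of_tendsto_of_frequently hlim <|
      hper.mono fun Q hQ => norm_stateVec_le_of_periodic hF hψ hQ.1 hQ.2
  exact eq_zero_of_stateVec_eq_zero hF hψ (norm_le_zero_iff.1 hnorm)

end Gordon

lemma tendsto_cofinite_zero_of_summable_norm_sq {ι V : Type*} [SeminormedAddCommGroup V]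
    {f : ι → V} (hf : Summable fun i => ‖f i‖ ^ 2) : Tendsto f cofinite (𝓝 0) := by
  rw [tendsto_zero_iff_norm_tendsto_zero]
  simpa using hf.tendsto_cofinite_zero.sqrt

lemma fcoef_ne_zero {t u v w : ℝ} (hP : paramP t u v w) (ω : ℤ → A) (n : ℤ) :
    fcoef t u v w ω n ≠ 0 := by
  obtain ⟨ht, huv, huw, hvw⟩ := hP
  unfold fcoef
  split <;> assumption

lemma fcoef_eq_of_eq {t u v w : ℝ} {ω : ℤ → A} {m n : ℤ} (h : ω m = ω n) :
    fcoef t u v w ω m = fcoef t u v w ω n := by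
  simp only [fcoef, h]

lemma gcoef_eq_of_eq {t u v w : ℝ} {ω : ℤ → A} {m n : ℤ} (h₁ : ω (m - 1) = ω (n - 1))
    (h : ω m = ω n) : gcoef t u v w ω m = gcoef t u v w ω n := by
  simp only [gcoef, h₁, h]

theorem absence_of_eigenvalues_X1_general (t u v w : ℝ) (hP : paramP t u v w)
    (s : A) (hs : s ∈ ({A.x, A.y, A.z} : Set A)) (p : ℤ)
    (E : ℝ) (ψ : ℤ → ℂ)
    (hl2 : Summable fun n : ℤ => ‖ψ n‖ ^ 2)
    (heig : ∀ n : ℤ,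
      (fcoef t u v w (fun m => omegaS s (m + p)) n : ℂ) * ψ (n + 1) +
      (fcoef t u v w (fun m => omegaS s (m + p)) (n - 1) : ℂ) * ψ (n - 1) +
      (gcoef t u v w (fun m => omegaS s (m + p)) n : ℂ) * ψ n = (E : ℂ) * ψ n) :
    ψ = 0 := by
  set ω : ℤ → A := fun m => omegaS s (m + p)
  obtain ⟨r, hr⟩ := exists_midLetter_eq hs
  set Q : ℕ → ℕ := fun k => 2 ^ (3 * k + r + 1) with hQ
  have hω : ∀ k, ∀ m ∈ Set.Icc (-p - Q k - 1) (-p + Q k - 1), ω (m + Q k) = ω m := by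
    rintro k m ⟨h₁, h₂⟩
    simp only [hQ, Nat.cast_pow, Nat.cast_ofNat] at h₁ h₂ ⊢
    simp only [ω, add_right_comm m]
    exact omegaS_add_two_pow (hr k) (by linarith) (by linarith)
  refine eq_zero_of_frequently_periodic (F := fun n => (fcoef t u v w ω n : ℂ))
    (fun n => Complex.ofReal_ne_zero.2 (fcoef_ne_zero hP ω n)) heig
    (tendsto_cofinite_zero_of_summable_norm_sq hl2) (-p) ?_
  refine frequently_atTop.2 fun N => ⟨Q N, ?_, ?_, ?_⟩
  · exact Nat.lt_two_pow_self.le.trans (Nat.pow_le_pow_right two_pos (by omega))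
  · rintro m hm
    exact congrArg _ (fcoef_eq_of_eq (hω N m hm))
  · rintro m ⟨h₁, h₂⟩
    refine congrArg _ (gcoef_eq_of_eq ?_ (hω N m ⟨by omega, h₂⟩))
    rw [add_sub_right_comm]
    exact hω N _ ⟨by omega, by omega⟩

/-- **Absence of eigenvalues** for the operators attached to the shifted symmetric
sequences `ω(n) = ω⁽ˢ⁾(n + p)` (the family `X₁` of Schreier graphs): for
`(t,u,v,w) ∈ 𝒫` with not `u = v = w`, every square-summable solution of the
eigenvalue equation vanishes identically. -/
theorem absence_of_eigenvalues_X1 (t u v w : ℝ) (hP : paramP t u v w)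
    (hne : ¬ (u = v ∧ v = w))
    (s : A) (hs : s ∈ ({A.x, A.y, A.z} : Set A)) (p : ℤ)
    (E : ℝ) (ψ : ℤ → ℂ)
    (hl2 : Summable fun n : ℤ => ‖ψ n‖ ^ 2)
    (heig : ∀ n : ℤ,
      (fcoef t u v w (fun m => omegaS s (m + p)) n : ℂ) * ψ (n + 1) +
      (fcoef t u v w (fun m => omegaS s (m + p)) (n - 1) : ℂ) * ψ (n - 1) +
      (gcoef t u v w (fun m => omegaS s (m + p)) n : ℂ) * ψ n = (E : ℂ) * ψ n) :
    ψ = 0 :=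
  absence_of_eigenvalues_X1_general t u v w hP s hs p E ψ hl2 heig
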